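/- arXiv:2003.03664 — 2 statements merged into one kernel-verified Lean document; each statement's English description precedes it below -/
import Mathlib

section
/- Weak regularity lemma for [0,1]-valued functions: for every ε > 0, every interval partition 𝒫 of [0,1], and every integrable f : [0,1] → [0,1], there exists an interval partition 𝒫_ε refining 𝒫 with at most |𝒫| + 2ε^{−2} parts such that ‖f − 𝔼(f|𝒫_ε)‖_□ ≤ ε. -/
open MeasureTheory

/-- A finite partition of `(0,1]` into nondegenerate (half-open) intervals. -/
def IsIntervalPartition (P : Finset (Set ℝ)) : Prop :=
  (∀ s ∈ P, ∃ a b : ℝ, a < b ∧ s = Set.Ioc a b) ∧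
  (P : Set (Set ℝ)).PairwiseDisjoint id ∧
  ⋃₀ (P : Set (Set ℝ)) = Set.Ioc (0:ℝ) 1

/-- A finite measurable partition of `(0,1]` into atoms of positive measure. -/
def IsMeasPartition (P : Finset (Set ℝ)) : Prop :=
  (∀ s ∈ P, MeasurableSet s ∧ 0 < volume s) ∧
  (P : Set (Set ℝ)).PairwiseDisjoint id ∧
  ⋃₀ (P : Set (Set ℝ)) = Set.Ioc (0:ℝ) 1

/-- `𝒬` refines `𝒫`: every atom of `𝒬` is contained in an atom of `𝒫`. -/
def Refines (Q P : Finset (Set ℝ)) : Prop := ∀ q ∈ Q, ∃ p ∈ P, q ⊆ p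

/-- The conditional expectation `𝔼(f|𝒫)` of `f` with respect to a finite partition `𝒫`. -/
noncomputable def condExpPart (P : Finset (Set ℝ)) (f : ℝ → ℝ) (x : ℝ) : ℝ :=
  ∑ s ∈ P, Set.indicator s (fun _ => (∫ t in s, f t) / (volume s).toReal) x

/-- The interval norm `‖h‖_□ = sup_{I ⊆ [0,1] interval} |∫_I h|`. -/
noncomputable def boxNorm (h : ℝ → ℝ) : ℝ :=
  sSup {y | ∃ a b : ℝ, 0 ≤ a ∧ a ≤ b ∧ b ≤ 1 ∧ y = |∫ x in a..b, h x|}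

/-!
Subdivide every atom of `𝒫` into pieces of length at most `ε / 2`; this adds at most
`2 / ε ≤ 2 ε⁻²` atoms when `ε ≤ 1`. For the refinement `𝒬`, the function `h = f - 𝔼(f|𝒬)` has
zero integral over every atom and `|h| ≤ 1`, so `∫₀ᵗ h` only sees the part of the atom
containing `t` and is at most `ε / 2`. Every interval integral is a difference of two such prefix
integrals. When `ε > 1`, the bound `|h| ≤ 1` already gives the claim for `𝒬 = 𝒫`.
-/

open MeasureTheory Set

lemma condExpPart_eq_of_mem {P : Finset (Set ℝ)} (hP : (P : Set (Set ℝ)).PairwiseDisjoint id)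
    {s : Set ℝ} (hs : s ∈ P) {x : ℝ} (hx : x ∈ s) (f : ℝ → ℝ) :
    condExpPart P f x = (∫ t in s, f t) / volume.real s := by
  rw [condExpPart, Finset.sum_eq_single_of_mem s hs, indicator_of_mem hx, measureReal_def]
  intro t ht hts
  exact indicator_of_notMem (fun hxt => disjoint_left.1 (hP ht hs hts) hxt hx) _

namespace IsMeasPartition

variable {P : Finset (Set ℝ)} {s : Set ℝ} {f : ℝ → ℝ}

lemma biUnion_eq (hP : IsMeasPartition P) : ⋃ s ∈ P, s = Ioc (0 : ℝ) 1 := by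
  rw [← Finset.set_biUnion_coe, ← sUnion_eq_biUnion, hP.2.2]

lemma exists_mem {x : ℝ} (hP : IsMeasPartition P) (hx : x ∈ Ioc (0 : ℝ) 1) : ∃ s ∈ P, x ∈ s := by
  simpa [← hP.biUnion_eq] using hx

lemma subset_Ioc (hP : IsMeasPartition P) (hs : s ∈ P) : s ⊆ Ioc 0 1 :=
  hP.2.2 ▸ subset_sUnion_of_mem hs

lemma measure_ne_top (hP : IsMeasPartition P) (hs : s ∈ P) : volume s ≠ ⊤ :=
  ((measure_mono (hP.subset_Ioc hs)).trans_lt (by simp)).ne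

lemma measureReal_pos (hP : IsMeasPartition P) (hs : s ∈ P) : 0 < volume.real s :=
  ENNReal.toReal_pos (hP.1 s hs).2.ne' (hP.measure_ne_top hs)

lemma sum_measureReal (hP : IsMeasPartition P) : ∑ s ∈ P, volume.real s = 1 := by
  rw [← measureReal_biUnion_finset (f := fun s => s) hP.2.1 (fun s hs => (hP.1 s hs).1)
    (fun s hs => hP.measure_ne_top hs), hP.biUnion_eq]
  simp

lemma setIntegral_eq_sum_inter {A : Set ℝ} {h : ℝ → ℝ} (hP : IsMeasPartition P)
    (hA : MeasurableSet A) (hAsub : A ⊆ Ioc 0 1) (hh : IntegrableOn h (Ioc 0 1)) :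
    ∫ x in A, h x = ∑ s ∈ P, ∫ x in s ∩ A, h x := by
  have hA_eq : A = ⋃ s ∈ P, s ∩ A := by
    rw [← iUnion₂_inter, hP.biUnion_eq, inter_eq_right.2 hAsub]
  conv_lhs => rw [hA_eq]
  refine integral_biUnion_finset P (fun s hs => (hP.1 s hs).1.inter hA) ?_
    (fun s hs => hh.mono_set (inter_subset_left.trans (hP.subset_Ioc hs)))
  exact fun s hs t ht hst => (hP.2.1 hs ht hst).mono inter_subset_left inter_subset_left

lemma integrable_condExpPart (hP : IsMeasPartition P) : Integrable (condExpPart P f) :=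
  integrable_finsetSum _ fun s hs =>
    (integrable_indicator_iff (hP.1 s hs).1).2 (integrableOn_const (hP.measure_ne_top hs))

lemma setIntegral_condExpPart (hP : IsMeasPartition P) (hs : s ∈ P) :
    ∫ x in s, condExpPart P f x = ∫ x in s, f x := by
  rw [setIntegral_congr_fun (hP.1 s hs).1 fun x hx => condExpPart_eq_of_mem hP.2.1 hs hx f,
    setIntegral_const, smul_eq_mul, mul_div_cancel₀ _ (hP.measureReal_pos hs).ne']

lemma setIntegral_sub_condExpPart (hP : IsMeasPartition P) (hs : s ∈ P)
    (hf : IntegrableOn f s) : ∫ x in s, (f x - condExpPart P f x) = 0 := by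
  rw [integral_sub hf hP.integrable_condExpPart.integrableOn, hP.setIntegral_condExpPart hs,
    sub_self]

lemma condExpPart_mem_Icc {m M x : ℝ} (hP : IsMeasPartition P) (hf : IntegrableOn f (Ioc 0 1))
    (hfm : ∀ y ∈ Ioc (0 : ℝ) 1, f y ∈ Icc m M) (hx : x ∈ Ioc (0 : ℝ) 1) :
    condExpPart P f x ∈ Icc m M := by
  obtain ⟨s, hs, hxs⟩ := hP.exists_mem hx
  rw [condExpPart_eq_of_mem hP.2.1 hs hxs, div_eq_inv_mul, ← smul_eq_mul, ← setAverage_eq]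
  exact convex_Icc m M |>.set_average_mem isClosed_Icc (hP.1 s hs).2.ne'
    (hP.measure_ne_top hs)
    (ae_restrict_of_forall_mem (hP.1 s hs).1 fun y hy => hfm y (hP.subset_Ioc hs hy))
    (hf.mono_set (hP.subset_Ioc hs))

lemma abs_sub_condExpPart_le {m M x : ℝ} (hP : IsMeasPartition P)
    (hf : IntegrableOn f (Ioc 0 1)) (hfm : ∀ y ∈ Ioc (0 : ℝ) 1, f y ∈ Icc m M)
    (hx : x ∈ Ioc (0 : ℝ) 1) : |f x - condExpPart P f x| ≤ M - m := by
  have h₁ := hfm x hx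
  have h₂ := hP.condExpPart_mem_Icc hf hfm hx
  rw [abs_sub_le_iff]
  constructor <;> linarith [h₁.1, h₁.2, h₂.1, h₂.2]

end IsMeasPartition

lemma exists_subdivision_Ioc {a b δ : ℝ} (hab : a < b) (hδ : 0 < δ) :
    ∃ R : Finset (Set ℝ), (∀ r ∈ R, ∃ c d : ℝ, c < d ∧ r = Ioc c d ∧ d - c ≤ δ) ∧
      (R : Set (Set ℝ)).PairwiseDisjoint id ∧ ⋃₀ (R : Set (Set ℝ)) = Ioc a b ∧
      (R.card : ℝ) ≤ (b - a) / δ + 1 := by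
  classical
  set n := ⌈(b - a) / δ⌉₊
  have hn : (0 : ℝ) < n := Nat.cast_pos.2 (Nat.ceil_pos.2 (div_pos (sub_pos.2 hab) hδ))
  set ℓ := (b - a) / n
  have hℓ : ℓ ≤ δ := by
    rw [div_le_iff₀ hn, ← div_le_iff₀' hδ]
    exact Nat.le_ceil _
  set x : ℕ → ℝ := fun i => a + i * ℓ
  have hx : StrictMono x := fun i j hij => by
    have hℓ₀ : 0 < ℓ := div_pos (sub_pos.2 hab) hn
    simp only [x]
    gcongr
  refine ⟨(Finset.range n).image fun i => Ioc (x i) (x (i + 1)), ?_, ?_, ?_, ?_⟩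
  · simp only [Finset.mem_image]
    rintro _ ⟨i, -, rfl⟩
    refine ⟨_, _, hx (Nat.lt_succ_self i), rfl, ?_⟩
    simp only [x]
    push_cast
    linarith
  · rintro _ hr₁ _ hr₂ hne
    simp only [Finset.coe_image, mem_image, Finset.mem_coe] at hr₁ hr₂
    obtain ⟨i, -, rfl⟩ := hr₁
    obtain ⟨j, -, rfl⟩ := hr₂
    exact hx.monotone.pairwise_disjoint_on_Ioc_succ fun hij => hne (hij ▸ rfl)
  · have hxn : x n = b := by
      simp only [x, ℓ]
      field_simp
      ring
    have hIco : Ico 0 n = Iio n := by ext; simp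
    rw [Finset.coe_image, sUnion_image, Finset.coe_range, ← hIco]
    simpa [hxn, x] using hx.monotone.biUnion_Ico_Ioc_map_succ 0 n
  · calc ((Finset.range n).image _).card ≤ (n : ℝ) := by
          exact_mod_cast Finset.card_image_le.trans (Finset.card_range n).le
      _ ≤ (b - a) / δ + 1 := (Nat.ceil_lt_add_one (div_pos (sub_pos.2 hab) hδ).le).le

lemma boxNorm_le_of_abs_intervalIntegral_le {h : ℝ → ℝ} {C : ℝ} (hC : 0 ≤ C)
    (hI : ∀ a b : ℝ, 0 ≤ a → a ≤ b → b ≤ 1 → |∫ x in a..b, h x| ≤ C) : boxNorm h ≤ C :=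
  Real.sSup_le (by rintro _ ⟨a, b, ha, hab, hb, rfl⟩; exact hI a b ha hab hb) hC

lemma boxNorm_le_of_abs_le {h : ℝ → ℝ} {M : ℝ} (hM : ∀ x ∈ Ioc (0 : ℝ) 1, |h x| ≤ M) :
    boxNorm h ≤ M := by
  have hM₀ : 0 ≤ M := (abs_nonneg _).trans (hM 1 ⟨one_pos, le_rfl⟩)
  refine boxNorm_le_of_abs_intervalIntegral_le hM₀ fun a b ha hab hb => ?_
  calc |∫ x in a..b, h x| ≤ M * |b - a| := by
        refine intervalIntegral.norm_integral_le_of_norm_le_const fun x hx =>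
          (Real.norm_eq_abs _).trans_le (hM x ?_)
        rw [uIoc_of_le hab] at hx
        exact Ioc_subset_Ioc ha hb hx
    _ ≤ M * 1 := by gcongr; rw [abs_of_nonneg (sub_nonneg.2 hab)]; linarith
    _ = M := mul_one M

lemma boxNorm_le_two_mul_of_abs_setIntegral_Ioc_le {h : ℝ → ℝ} {C : ℝ}
    (hh : IntegrableOn h (Ioc 0 1))
    (hC : ∀ t ∈ Ioc (0 : ℝ) 1, |∫ x in Ioc 0 t, h x| ≤ C) : boxNorm h ≤ 2 * C := by
  have hC₀ : 0 ≤ C := (abs_nonneg _).trans (hC 1 ⟨one_pos, le_rfl⟩)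
  have hprefix : ∀ t, 0 ≤ t → t ≤ 1 → |∫ x in (0 : ℝ)..t, h x| ≤ C := by
    intro t ht₀ ht₁
    rcases ht₀.eq_or_lt with rfl | ht₀
    · simpa using hC₀
    · rw [intervalIntegral.integral_of_le ht₀.le]
      exact hC t ⟨ht₀, ht₁⟩
  have hint : ∀ t, 0 ≤ t → t ≤ 1 → IntervalIntegrable h volume 0 t := fun t ht₀ ht₁ =>
    (intervalIntegrable_iff_integrableOn_Ioc_of_le ht₀).2 (hh.mono_set (Ioc_subset_Ioc_right ht₁))
  refine boxNorm_le_of_abs_intervalIntegral_le (by linarith) fun a b ha hab hb => ?_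
  rw [← intervalIntegral.integral_interval_sub_left (hint b (ha.trans hab) hb)
    (hint a ha (hab.trans hb))]
  calc _ ≤ |∫ x in (0 : ℝ)..b, h x| + |∫ x in (0 : ℝ)..a, h x| := abs_sub _ _
    _ ≤ C + C := add_le_add (hprefix b (ha.trans hab) hb) (hprefix a ha (hab.trans hb))
    _ = 2 * C := by ring

namespace IsIntervalPartition

variable {P : Finset (Set ℝ)}

lemma isMeasPartition (hP : IsIntervalPartition P) : IsMeasPartition P := by
  refine ⟨fun s hs => ?_, hP.2⟩
  obtain ⟨a, b, hab, rfl⟩ := hP.1 s hs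
  exact ⟨measurableSet_Ioc, by simpa using hab⟩

lemma abs_setIntegral_Ioc_zero_le {h : ℝ → ℝ} {M δ t : ℝ} (hP : IsIntervalPartition P)
    (hh : IntegrableOn h (Ioc 0 1)) (hM : ∀ x ∈ Ioc (0 : ℝ) 1, |h x| ≤ M)
    (hzero : ∀ s ∈ P, ∫ x in s, h x = 0) (hδ : ∀ s ∈ P, volume.real s ≤ δ)
    (ht : t ∈ Ioc (0 : ℝ) 1) : |∫ x in Ioc 0 t, h x| ≤ M * δ := by
  have hP' := hP.isMeasPartition
  obtain ⟨s₀, hs₀, hts₀⟩ := hP'.exists_mem ht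
  have hsub : Ioc 0 t ⊆ Ioc 0 1 := Ioc_subset_Ioc_right ht.2
  have hvanish : ∀ s ∈ P, s ≠ s₀ → ∫ x in s ∩ Ioc 0 t, h x = 0 := by
    intro s hs hne
    have hts : t ∉ s := fun hts => disjoint_left.1 (hP.2.1 hs hs₀ hne) hts hts₀
    have hpos : ∀ x ∈ s, 0 < x := fun x hx => (hP'.subset_Ioc hs hx).1
    obtain ⟨c, d, -, rfl⟩ := hP.1 s hs
    by_cases htc : t ≤ c
    · have hempty : Ioc c d ∩ Ioc 0 t = ∅ :=
        eq_empty_of_forall_notMem fun x hx => by linarith [hx.1.1, hx.2.2]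
      simp [hempty]
    · have hdt : d < t := by
        by_contra! htd
        exact hts (mem_Ioc.2 ⟨not_le.1 htc, htd⟩)
      have hsubt : Ioc c d ⊆ Ioc 0 t := fun x hx => ⟨hpos x hx, hx.2.trans hdt.le⟩
      rw [inter_eq_left.2 hsubt]
      exact hzero _ hs
  rw [hP'.setIntegral_eq_sum_inter measurableSet_Ioc hsub hh,
    Finset.sum_eq_single_of_mem s₀ hs₀ hvanish]
  have hM₀ : 0 ≤ M := (abs_nonneg _).trans (hM t ht)
  calc |∫ x in s₀ ∩ Ioc 0 t, h x|
      ≤ M * volume.real (s₀ ∩ Ioc 0 t) :=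
        norm_setIntegral_le_of_norm_le_const
          ((measure_mono inter_subset_right).trans_lt measure_Ioc_lt_top)
          fun x hx => (Real.norm_eq_abs _).trans_le (hM x (hsub hx.2))
    _ ≤ M * volume.real s₀ := by
        gcongr
        exacts [hP'.measure_ne_top hs₀, inter_subset_left]
    _ ≤ M * δ := by gcongr; exact hδ s₀ hs₀

lemma biUnion [DecidableEq (Set ℝ)] (hP : IsIntervalPartition P) {R : Set ℝ → Finset (Set ℝ)}
    (hR : ∀ s ∈ P, ∀ r ∈ R s, ∃ c d : ℝ, c < d ∧ r = Ioc c d)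
    (hRdisj : ∀ s ∈ P, (R s : Set (Set ℝ)).PairwiseDisjoint id)
    (hRunion : ∀ s ∈ P, ⋃₀ (R s : Set (Set ℝ)) = s) :
    IsIntervalPartition (P.biUnion R) ∧ Refines (P.biUnion R) P := by
  have hRunion' : ∀ s ∈ P, ⋃ r ∈ (R s : Set (Set ℝ)), r = s := fun s hs =>
    (sUnion_eq_biUnion).symm.trans (hRunion s hs)
  refine ⟨⟨fun r hr => ?_, ?_, ?_⟩, fun r hr => ?_⟩
  · obtain ⟨s, hs, hr⟩ := Finset.mem_biUnion.1 hr
    exact hR s hs r hr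
  · rw [Finset.coe_biUnion]
    refine PairwiseDisjoint.biUnion (fun s hs t ht hst => ?_) fun s hs => hRdisj s hs
    show Disjoint (⋃ r ∈ (R s : Set (Set ℝ)), r) (⋃ r ∈ (R t : Set (Set ℝ)), r)
    rw [hRunion' s hs, hRunion' t ht]
    exact hP.2.1 hs ht hst
  · rw [← hP.2.2, Finset.coe_biUnion, sUnion_eq_biUnion (s := (P : Set (Set ℝ)))]
    simp only [sUnion_iUnion]
    exact iUnion₂_congr hRunion
  · obtain ⟨s, hs, hr⟩ := Finset.mem_biUnion.1 hr
    exact ⟨s, hs, hRunion s hs ▸ subset_sUnion_of_mem hr⟩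

lemma exists_refines_measureReal_le (hP : IsIntervalPartition P) {δ : ℝ} (hδ : 0 < δ) :
    ∃ Q : Finset (Set ℝ), IsIntervalPartition Q ∧ Refines Q P ∧
      (∀ q ∈ Q, volume.real q ≤ δ) ∧ (Q.card : ℝ) ≤ P.card + δ⁻¹ := by
  classical
  have hR : ∀ s ∈ P, ∃ R : Finset (Set ℝ),
      (∀ r ∈ R, ∃ c d : ℝ, c < d ∧ r = Ioc c d ∧ d - c ≤ δ) ∧
      (R : Set (Set ℝ)).PairwiseDisjoint id ∧ ⋃₀ (R : Set (Set ℝ)) = s ∧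
      (R.card : ℝ) ≤ volume.real s / δ + 1 := by
    intro s hs
    obtain ⟨a, b, hab, rfl⟩ := hP.1 s hs
    rw [Real.volume_real_Ioc_of_le hab.le]
    exact exists_subdivision_Ioc hab hδ
  choose! R hRint hRdisj hRunion hRcard using hR
  obtain ⟨hQ, hQP⟩ := hP.biUnion (fun s hs r hr => by
    obtain ⟨c, d, hcd, rfl, -⟩ := hRint s hs r hr
    exact ⟨c, d, hcd, rfl⟩) hRdisj hRunion
  refine ⟨P.biUnion R, hQ, hQP, fun q hq => ?_, ?_⟩
  · obtain ⟨s, hs, hq⟩ := Finset.mem_biUnion.1 hq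
    obtain ⟨c, d, hcd, rfl, hlen⟩ := hRint s hs q hq
    rwa [Real.volume_real_Ioc_of_le hcd.le]
  · calc ((P.biUnion R).card : ℝ) ≤ ∑ s ∈ P, ((R s).card : ℝ) := by
          exact_mod_cast Finset.card_biUnion_le
      _ ≤ ∑ s ∈ P, (volume.real s / δ + 1) := Finset.sum_le_sum hRcard
      _ = P.card + δ⁻¹ := by
          rw [Finset.sum_add_distrib, ← Finset.sum_div, hP.isMeasPartition.sum_measureReal]
          simp [add_comm]

lemma boxNorm_sub_condExpPart_le {f : ℝ → ℝ} {m M δ : ℝ} (hP : IsIntervalPartition P)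
    (hf : IntegrableOn f (Ioc 0 1)) (hfm : ∀ x ∈ Ioc (0 : ℝ) 1, f x ∈ Icc m M)
    (hδ : ∀ q ∈ P, volume.real q ≤ δ) :
    boxNorm (fun x => f x - condExpPart P f x) ≤ 2 * ((M - m) * δ) := by
  have hP' := hP.isMeasPartition
  have hh : IntegrableOn (fun x => f x - condExpPart P f x) (Ioc 0 1) :=
    hf.sub hP'.integrable_condExpPart.integrableOn
  exact boxNorm_le_two_mul_of_abs_setIntegral_Ioc_le hh fun t ht =>
    hP.abs_setIntegral_Ioc_zero_le hh (fun x hx => hP'.abs_sub_condExpPart_le hf hfm hx)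
      (fun s hs => hP'.setIntegral_sub_condExpPart hs (hf.mono_set (hP'.subset_Ioc hs))) hδ ht

end IsIntervalPartition

/-- Weak regularity lemma for `[0,1]`-valued functions. -/
theorem stmt16 (ε : ℝ) (hε : 0 < ε) (P : Finset (Set ℝ)) (hP : IsIntervalPartition P)
    (f : ℝ → ℝ) (hf : IntegrableOn f (Set.Icc (0:ℝ) 1))
    (hf1 : ∀ x ∈ Set.Icc (0:ℝ) 1, f x ∈ Set.Icc (0:ℝ) 1) :
    ∃ Q : Finset (Set ℝ), IsIntervalPartition Q ∧ Refines Q P ∧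
      (Q.card : ℝ) ≤ (P.card : ℝ) + 2 * ε⁻¹ ^ 2 ∧
      boxNorm (fun x => f x - condExpPart Q f x) ≤ ε := by
  have hf' : IntegrableOn f (Ioc 0 1) := hf.mono_set Ioc_subset_Icc_self
  have hf1' : ∀ x ∈ Ioc (0 : ℝ) 1, f x ∈ Icc 0 1 := fun x hx => hf1 x (Ioc_subset_Icc_self hx)
  rcases le_or_gt ε 1 with hε1 | hε1
  · obtain ⟨Q, hQ, hQP, hδ, hcard⟩ := hP.exists_refines_measureReal_le (half_pos hε)
    refine ⟨Q, hQ, hQP, hcard.trans ?_, ?_⟩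
    · have hinv : 1 ≤ ε⁻¹ := one_le_inv₀ hε |>.2 hε1
      rw [inv_div, div_eq_mul_inv]
      nlinarith
    · calc _ ≤ 2 * ((1 - 0) * (ε / 2)) := hQ.boxNorm_sub_condExpPart_le hf' hf1' hδ
        _ = ε := by ring
  · refine ⟨P, hP, fun s hs => ⟨s, hs, subset_rfl⟩, le_add_of_nonneg_right (by positivity), ?_⟩
    calc _ ≤ 1 - 0 := boxNorm_le_of_abs_le fun x hx =>
          hP.isMeasPartition.abs_sub_condExpPart_le hf' hf1' hx
      _ ≤ ε := by linarith
end

section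
/- Energy increment: let f : [0,1] → [0,1] be integrable, 𝒫 a finite interval partition of [0,1], and I ⊆ [0,1] an interval with |∫_I (f − 𝔼(f|𝒫))| > ε. If 𝒬 is the common refinement of 𝒫 with {I, I^c}, then ℰ_f(𝒬) ≥ ℰ_f(𝒫) + ε², where ℰ_f(𝒫) = ∫₀¹ (𝔼(f|𝒫))² dx. -/
open MeasureTheory

/-- The energy `ℰ_f(𝒫) = ∫₀¹ (𝔼(f|𝒫))²`. -/
noncomputable def energy (P : Finset (Set ℝ)) (f : ℝ → ℝ) : ℝ :=
  ∫ x in Set.Ioc (0:ℝ) 1, (condExpPart P f x) ^ 2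

/-! The orthogonality `∫ 𝔼(f|𝒫) (𝔼(f|𝒬) - 𝔼(f|𝒫)) = 0` turns the energy gain into
`∫₀¹ g²` with `g = 𝔼(f|𝒬) - 𝔼(f|𝒫)`. Since `I` is a union of atoms of `𝒬`, the integral of
`𝔼(f|𝒬)` over `I` is that of `f`, so `∫_I g = ∫_I (f - 𝔼(f|𝒫))`, and Cauchy–Schwarz on `I`
(of length at most one) gives `ε² < (∫_I g)² ≤ ∫_I g² ≤ ∫₀¹ g²`. -/

open Set

lemma IsIntervalPartition.isMeasPartition_s17 {P : Finset (Set ℝ)} (hP : IsIntervalPartition P) :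
    IsMeasPartition P := by
  obtain ⟨hint, hdisj, hunion⟩ := hP
  refine ⟨fun s hs => ?_, hdisj, hunion⟩
  obtain ⟨a, b, hab, rfl⟩ := hint s hs
  simpa [Real.volume_Ioc] using hab

namespace IsMeasPartition

variable {Q : Finset (Set ℝ)} (hQ : IsMeasPartition Q)
include hQ

lemma measurableSet : ∀ q ∈ Q, MeasurableSet q := fun q hq => (hQ.1 q hq).1

lemma subset_Ioc_s17 {q : Set ℝ} (hq : q ∈ Q) : q ⊆ Ioc 0 1 :=
  hQ.2.2 ▸ subset_sUnion_of_mem hq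

lemma toReal_volume_pos {q : Set ℝ} (hq : q ∈ Q) : 0 < (volume q).toReal :=
  ENNReal.toReal_pos (hQ.1 q hq).2.ne'
    (measure_ne_top_of_subset (hQ.subset_Ioc_s17 hq) measure_Ioc_lt_top.ne)

lemma eq_of_mem_of_mem {q q' : Set ℝ} (hq : q ∈ Q) (hq' : q' ∈ Q) {x : ℝ} (hx : x ∈ q)
    (hx' : x ∈ q') : q = q' :=
  hQ.2.1.elim hq hq' (not_disjoint_iff.mpr ⟨x, hx, hx'⟩)

open scoped Classical in
lemma biUnion_filter_subset {A : Set ℝ} (hA : A ⊆ Ioc 0 1)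
    (hsplit : ∀ q ∈ Q, q ⊆ A ∨ Disjoint q A) :
    ⋃ q ∈ Q.filter (· ⊆ A), q = A := by
  refine Subset.antisymm (iUnion₂_subset fun q hq => (Finset.mem_filter.mp hq).2) fun x hx => ?_
  obtain ⟨q, hq, hxq⟩ := mem_sUnion.mp (hQ.2.2 ▸ hA hx)
  refine mem_biUnion (Finset.mem_filter.mpr ⟨hq, ?_⟩) hxq
  exact (hsplit q hq).resolve_right (not_disjoint_iff.mpr ⟨x, hxq, hx⟩)

open scoped Classical in
lemma setIntegral_eq_sum {A : Set ℝ} (hA : A ⊆ Ioc 0 1)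
    (hsplit : ∀ q ∈ Q, q ⊆ A ∨ Disjoint q A) {h : ℝ → ℝ} (hh : IntegrableOn h A) :
    ∫ x in A, h x = ∑ q ∈ Q.filter (· ⊆ A), ∫ x in q, h x := by
  conv_lhs => rw [← hQ.biUnion_filter_subset hA hsplit]
  refine integral_biUnion_finset _ (fun q hq => hQ.measurableSet q (Finset.mem_filter.mp hq).1)
    (fun q hq q' hq' hne => hQ.2.1 (Finset.mem_filter.mp hq).1 (Finset.mem_filter.mp hq').1 hne)
    fun q hq => hh.mono_set (Finset.mem_filter.mp hq).2

lemma integral_Ioc_eq_sum {h : ℝ → ℝ} (hh : IntegrableOn h (Ioc 0 1)) :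
    ∫ x in Ioc 0 1, h x = ∑ q ∈ Q, ∫ x in q, h x := by
  classical
  rw [hQ.setIntegral_eq_sum subset_rfl (fun q hq => .inl (hQ.subset_Ioc_s17 hq)) hh,
    Finset.filter_true_of_mem fun q hq => hQ.subset_Ioc_s17 hq]

end IsMeasPartition

lemma Refines.subset_or_disjoint {P Q : Finset (Set ℝ)} (hP : IsMeasPartition P)
    (hQP : Refines Q P) {p : Set ℝ} (hp : p ∈ P) {q : Set ℝ} (hq : q ∈ Q) :
    q ⊆ p ∨ Disjoint q p := by
  obtain ⟨p', hp', hqp'⟩ := hQP q hq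
  rcases eq_or_ne p' p with rfl | hne
  · exact .inl hqp'
  · exact .inr ((hP.2.1 hp' hp hne).mono_left hqp')

section condExpPart

variable {Q : Finset (Set ℝ)} {f : ℝ → ℝ}

lemma condExpPart_eq_of_mem_s17 (hQ : IsMeasPartition Q) {q : Set ℝ} (hq : q ∈ Q) {x : ℝ}
    (hx : x ∈ q) : condExpPart Q f x = (∫ t in q, f t) / (volume q).toReal := by
  rw [condExpPart, Finset.sum_eq_single_of_mem q hq, indicator_of_mem hx]
  intro q' hq' hne
  exact indicator_of_notMem (fun hx' => hne (hQ.eq_of_mem_of_mem hq' hq hx' hx)) _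

lemma memLp_condExpPart (hQ : ∀ q ∈ Q, MeasurableSet q) (f : ℝ → ℝ) (p : ENNReal)
    (μ : Measure ℝ) [IsFiniteMeasure μ] : MemLp (condExpPart Q f) p μ := by
  have : condExpPart Q f =
      ∑ s ∈ Q, s.indicator (fun _ => (∫ t in s, f t) / (volume s).toReal) := by
    ext x
    simp [condExpPart]
  rw [this]
  exact memLp_finsetSum' _ fun s hs => (memLp_const _).indicator (hQ s hs)

lemma integrableOn_condExpPart (hQ : ∀ q ∈ Q, MeasurableSet q) (f : ℝ → ℝ) {A : Set ℝ}
    (hA : volume A ≠ ⊤) : IntegrableOn (condExpPart Q f) A :=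
  have := isFiniteMeasure_restrict.mpr hA
  (memLp_condExpPart hQ f 1 _).integrable le_rfl

lemma setIntegral_condExpPart_of_mem (hQ : IsMeasPartition Q) {q : Set ℝ} (hq : q ∈ Q) :
    ∫ x in q, condExpPart Q f x = ∫ x in q, f x := by
  rw [setIntegral_congr_fun (hQ.measurableSet q hq) fun x hx => condExpPart_eq_of_mem_s17 hQ hq hx,
    setIntegral_const, smul_eq_mul, measureReal_def,
    mul_div_cancel₀ _ (hQ.toReal_volume_pos hq).ne']

lemma setIntegral_condExpPart (hQ : IsMeasPartition Q) {A : Set ℝ} (hA : A ⊆ Ioc 0 1)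
    (hsplit : ∀ q ∈ Q, q ⊆ A ∨ Disjoint q A) (hf : IntegrableOn f A) :
    ∫ x in A, condExpPart Q f x = ∫ x in A, f x := by
  classical
  have hint : IntegrableOn (condExpPart Q f) A :=
    integrableOn_condExpPart hQ.measurableSet f
      (measure_ne_top_of_subset hA measure_Ioc_lt_top.ne)
  rw [hQ.setIntegral_eq_sum hA hsplit hint, hQ.setIntegral_eq_sum hA hsplit hf]
  exact Finset.sum_congr rfl fun q hq =>
    setIntegral_condExpPart_of_mem hQ (Finset.mem_filter.mp hq).1

lemma integral_condExpPart_mul_eq_zero (hQ : IsMeasPartition Q) {h : ℝ → ℝ}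
    (hh : IntegrableOn h (Ioc 0 1)) (h0 : ∀ q ∈ Q, ∫ x in q, h x = 0) :
    ∫ x in Ioc 0 1, condExpPart Q f x * h x = 0 := by
  have hint : IntegrableOn (fun x => condExpPart Q f x * h x) (Ioc 0 1) :=
    hh.mul_of_top_right (memLp_condExpPart hQ.measurableSet f ⊤ _)
  rw [hQ.integral_Ioc_eq_sum hint]
  refine Finset.sum_eq_zero fun q hq => ?_
  rw [setIntegral_congr_fun (hQ.measurableSet q hq) fun x hx => by
      rw [condExpPart_eq_of_mem_s17 hQ hq hx],
    integral_const_mul, h0 q hq, mul_zero]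

end condExpPart

lemma energy_sub_energy_eq_integral_sq {P Q : Finset (Set ℝ)} (hP : IsMeasPartition P)
    (hQ : IsMeasPartition Q) (hQP : Refines Q P) {f : ℝ → ℝ} (hf : IntegrableOn f (Ioc 0 1)) :
    energy Q f - energy P f
      = ∫ x in Ioc 0 1, (condExpPart Q f x - condExpPart P f x) ^ 2 := by
  rw [energy, energy]
  set u := condExpPart Q f
  set v := condExpPart P f
  have hu : ∀ p, MemLp u p (volume.restrict (Ioc 0 1)) :=
    fun p => memLp_condExpPart hQ.measurableSet f p _
  have hv : ∀ p, MemLp v p (volume.restrict (Ioc 0 1)) :=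
    fun p => memLp_condExpPart hP.measurableSet f p _
  have hd : IntegrableOn (fun x => u x - v x) (Ioc 0 1) :=
    ((hu 1).sub (hv 1)).integrable le_rfl
  have hd2 : IntegrableOn (fun x => (u x - v x) ^ 2) (Ioc 0 1) := ((hu 2).sub (hv 2)).integrable_sq
  have hvd : IntegrableOn (fun x => v x * (u x - v x)) (Ioc 0 1) := hd.mul_of_top_right (hv ⊤)
  have horth : ∫ x in Ioc 0 1, v x * (u x - v x) = 0 := by
    refine integral_condExpPart_mul_eq_zero hP hd fun p hp => ?_
    have hpI := hP.subset_Ioc_s17 hp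
    have hpfin : volume p ≠ ⊤ := measure_ne_top_of_subset hpI measure_Ioc_lt_top.ne
    rw [integral_sub (integrableOn_condExpPart hQ.measurableSet f hpfin)
        (integrableOn_condExpPart hP.measurableSet f hpfin),
      setIntegral_condExpPart hQ hpI (fun q hq => hQP.subset_or_disjoint hP hp hq)
        (hf.mono_set hpI),
      setIntegral_condExpPart_of_mem hP hp, sub_self]
  have hsq : ∀ x, u x ^ 2 = ((u x - v x) ^ 2 + 2 * (v x * (u x - v x))) + v x ^ 2 :=
    fun x => by ring
  have hsum : IntegrableOn (fun x => (u x - v x) ^ 2 + 2 * (v x * (u x - v x))) (Ioc 0 1) :=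
    hd2.add (hvd.const_mul 2)
  simp_rw [hsq]
  rw [integral_add hsum (hv 2).integrable_sq, integral_add hd2 (hvd.const_mul 2),
    integral_const_mul, horth]
  ring

lemma sq_integral_le_measureReal_univ_mul {α : Type*} [MeasurableSpace α] {μ : Measure α}
    [IsFiniteMeasure μ] {g : α → ℝ} (hg : MemLp g 2 μ) :
    (∫ x, g x ∂μ) ^ 2 ≤ μ.real univ * ∫ x, g x ^ 2 ∂μ := by
  set m := μ.real univ
  set J := ∫ x, g x ∂μ
  have hg1 : Integrable g μ := hg.integrable one_le_two
  rcases (measureReal_nonneg : 0 ≤ m).eq_or_lt with hm | hm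
  · have hμ : μ = 0 := Measure.measure_univ_eq_zero.mp
      ((measureReal_eq_zero_iff (measure_ne_top μ univ)).mp hm.symm)
    simp [J, hμ]
  -- variance trick: `0 ≤ ∫ (m g - J)² = m (m ∫ g² - J²)`
  have hvar : ∫ x, (m * g x - J) ^ 2 ∂μ = m * (m * ∫ x, g x ^ 2 ∂μ - J ^ 2) := by
    have hsq : ∀ x, (m * g x - J) ^ 2 = m ^ 2 * g x ^ 2 - 2 * m * J * g x + J ^ 2 :=
      fun x => by ring
    have hint : Integrable (fun x => m ^ 2 * g x ^ 2 - 2 * m * J * g x) μ :=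
      (hg.integrable_sq.const_mul _).sub (hg1.const_mul _)
    simp_rw [hsq]
    rw [integral_add hint (integrable_const _),
      integral_sub (hg.integrable_sq.const_mul _) (hg1.const_mul _),
      integral_const_mul, integral_const_mul, integral_const, smul_eq_mul]
    ring
  have := hvar ▸ integral_nonneg fun x => sq_nonneg (m * g x - J)
  linarith [(mul_nonneg_iff_of_pos_left hm).mp this]

theorem stmt17_general (f : ℝ → ℝ) (hf : IntegrableOn f (Set.Ioc (0:ℝ) 1))
    (P : Finset (Set ℝ)) (hP : IsIntervalPartition P)
    (I : Set ℝ) (hIsub : I ⊆ Set.Ioc (0:ℝ) 1)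
    (ε : ℝ) (hε : 0 < ε)
    (hbig : ε < |∫ x in I, (f x - condExpPart P f x)|)
    (Q : Finset (Set ℝ)) (hQ : IsMeasPartition Q) (hQP : Refines Q P)
    (hQI : ∀ q ∈ Q, q ⊆ I ∨ q ⊆ Iᶜ) :
    energy P f + ε ^ 2 ≤ energy Q f := by
  have hPm := hP.isMeasPartition_s17
  have hIfin : volume I ≠ ⊤ := measure_ne_top_of_subset hIsub measure_Ioc_lt_top.ne
  have := isFiniteMeasure_restrict.mpr hIfin
  set eQ := condExpPart Q f
  set eP := condExpPart P f
  have hPI := integrableOn_condExpPart hPm.measurableSet f hIfin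
  have hgI : ∫ x in I, (eQ x - eP x) = ∫ x in I, (f x - eP x) := by
    rw [integral_sub (integrableOn_condExpPart hQ.measurableSet f hIfin) hPI,
      integral_sub (hf.mono_set hIsub) hPI, setIntegral_condExpPart hQ hIsub
        (fun q hq => (hQI q hq).imp_right subset_compl_iff_disjoint_right.mp) (hf.mono_set hIsub)]
  have hg : ∀ p (μ : Measure ℝ) [IsFiniteMeasure μ], MemLp (fun x => eQ x - eP x) p μ :=
    fun p μ _ => (memLp_condExpPart hQ.measurableSet f p μ).sub
      (memLp_condExpPart hPm.measurableSet f p μ)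
  calc energy P f + ε ^ 2
      ≤ energy P f + (∫ x in I, (eQ x - eP x)) ^ 2 := by
        rw [hgI, ← sq_abs (∫ x in I, _)]
        gcongr
    _ ≤ energy P f + volume.real I * ∫ x in I, (eQ x - eP x) ^ 2 := by
        simpa only [measureReal_restrict_apply_univ, add_le_add_iff_left]
          using sq_integral_le_measureReal_univ_mul (hg 2 (volume.restrict I))
    _ ≤ energy P f + ∫ x in I, (eQ x - eP x) ^ 2 := by
        gcongr
        exact mul_le_of_le_one_left (integral_nonneg fun x => sq_nonneg _)
          (by simpa using measureReal_mono (μ := volume) hIsub measure_Ioc_lt_top.ne)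
    _ ≤ energy P f + ∫ x in Ioc 0 1, (eQ x - eP x) ^ 2 := by
        gcongr energy P f + ?_
        exact setIntegral_mono_set (hg 2 _).integrable_sq (ae_of_all _ fun x => sq_nonneg _)
          hIsub.eventuallyLE
    _ = energy Q f := by
        rw [← energy_sub_energy_eq_integral_sq hPm hQ hQP hf]
        ring

/-- Energy increment: refining by an interval witnessing `‖f - 𝔼(f|𝒫)‖_□ > ε`
increases the energy by at least `ε²`. -/
theorem stmt17 (f : ℝ → ℝ) (hf : IntegrableOn f (Set.Ioc (0:ℝ) 1))
    (hf1 : ∀ x ∈ Set.Ioc (0:ℝ) 1, f x ∈ Set.Icc (0:ℝ) 1)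
    (P : Finset (Set ℝ)) (hP : IsIntervalPartition P)
    (I : Set ℝ) (hI : ∃ a b : ℝ, I = Set.Ioc a b) (hIsub : I ⊆ Set.Ioc (0:ℝ) 1)
    (ε : ℝ) (hε : 0 < ε)
    (hbig : ε < |∫ x in I, (f x - condExpPart P f x)|)
    (Q : Finset (Set ℝ)) (hQ : IsMeasPartition Q) (hQP : Refines Q P)
    (hQI : ∀ q ∈ Q, q ⊆ I ∨ q ⊆ Iᶜ) :
    energy P f + ε ^ 2 ≤ energy Q f :=
  stmt17_general f hf P hP I hIsub ε hε hbig Q hQ hQP hQI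
end
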